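/- Let ρ_β = Z_β^{-1} e^{−βh} be a Gibbs state for a self-adjoint h on finite-dimensional H, with Z_β = Tr[e^{−βh}]. If every U(σ) commutes with H_2 = h⊗1 + 1⊗h, then ρ_β ⋆ ρ_β = ρ_β, i.e. Gibbs states are steady states of the quantum Kac–Boltzmann equation. -/

import Mathlib

open Matrix MeasureTheory
open scoped Matrix.Norms.L2Operator

/-- Tensor (Kronecker) product of operators on `H = ℂ^n`, as an operator on `H ⊗ H`. -/
def tensorMat {n : ℕ} (A B : Matrix (Fin n) (Fin n) ℂ) :
    Matrix (Fin n × Fin n) (Fin n × Fin n) ℂ :=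
  Matrix.of fun p q => A p.1 q.1 * B p.2 q.2

/-- Partial trace over the second tensor factor. -/
noncomputable def ptrace2 {n : ℕ} (M : Matrix (Fin n × Fin n) (Fin n × Fin n) ℂ) :
    Matrix (Fin n) (Fin n) ℂ :=
  Matrix.of fun a b => ∑ k : Fin n, M (a, k) (b, k)

/-- The two-particle Hamiltonian `H_2 = h ⊗ 1 + 1 ⊗ h` on `H ⊗ H`. -/
def H2mat {n : ℕ} (h : Matrix (Fin n) (Fin n) ℂ) :
    Matrix (Fin n × Fin n) (Fin n × Fin n) ℂ :=
  Matrix.of fun p q =>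
    h p.1 q.1 * (if p.2 = q.2 then (1 : ℂ) else 0) +
      (if p.1 = q.1 then (1 : ℂ) else 0) * h p.2 q.2

/-- The averaged conjugation operator `Q(X) = ∫ U(σ) X U(σ)* dν(σ)` on `B(H ⊗ H)`. -/
noncomputable def Qop {C : Type*} [MeasurableSpace C] {n : ℕ}
    (ν : Measure C) (U : C → Matrix (Fin n × Fin n) (Fin n × Fin n) ℂ)
    (X : Matrix (Fin n × Fin n) (Fin n × Fin n) ℂ) :
    Matrix (Fin n × Fin n) (Fin n × Fin n) ℂ :=
  ∫ σ, U σ * X * (U σ)ᴴ ∂ν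

/-- The quantum Wild convolution `A ⋆ B = Tr₂[Q(A ⊗ B)]`. -/
noncomputable def wildConv {C : Type*} [MeasurableSpace C] {n : ℕ}
    (ν : Measure C) (U : C → Matrix (Fin n × Fin n) (Fin n × Fin n) ℂ)
    (A B : Matrix (Fin n) (Fin n) ℂ) : Matrix (Fin n) (Fin n) ℂ :=
  ptrace2 (Qop ν U (tensorMat A B))

/-- The Gibbs state `ρ_β = e^{−βh} / Tr[e^{−βh}]`. -/
noncomputable def gibbsState {n : ℕ} (β : ℝ) (h : Matrix (Fin n) (Fin n) ℂ) :
    Matrix (Fin n) (Fin n) ℂ :=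
  ((NormedSpace.exp ((-β) • h)).trace)⁻¹ • NormedSpace.exp ((-β) • h)

open scoped Kronecker

/-!
Since `U(σ)` commutes with `H₂`, it commutes with `e^{-βH₂} = e^{-βh} ⊗ e^{-βh}`, hence with
`ρ_β ⊗ ρ_β`; unitarity then makes every conjugate in the average defining `Q` equal to
`ρ_β ⊗ ρ_β`. Finally `Tr₂[ρ_β ⊗ ρ_β] = Tr[ρ_β] ρ_β = ρ_β`.
-/

-- `NormedSpace.map_exp` would need a `NormedAlgebra ℚ` structure, which matrices lack here.
theorem map_matrix_exp {𝕜 m q : Type*} [RCLike 𝕜] [Fintype m] [DecidableEq m] [Fintype q]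
    [DecidableEq q] {F : Type*}
    [FunLike F (Matrix m m 𝕜) (Matrix q q 𝕜)] [RingHomClass F (Matrix m m 𝕜) (Matrix q q 𝕜)]
    (f : F) (hf : Continuous f) (A : Matrix m m 𝕜) :
    f (NormedSpace.exp A) = NormedSpace.exp (f A) :=
  NormedSpace.map_exp_of_mem_ball (𝕂 := 𝕜) f hf A <|
    (NormedSpace.expSeries_radius_eq_top 𝕜 (Matrix m m 𝕜)).symm ▸ edist_lt_top _ _

namespace Matrix

variable {𝕜 : Type*} [RCLike 𝕜] {m p : Type*} [Fintype m] [DecidableEq m] [Fintype p]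
  [DecidableEq p]

def kroneckerOneRingHom : Matrix m m 𝕜 →+* Matrix (m × p) (m × p) 𝕜 where
  toFun A := A ⊗ₖ 1
  map_one' := one_kronecker_one
  map_mul' A B := by rw [← mul_kronecker_mul, one_mul]
  map_zero' := zero_kronecker _
  map_add' A B := add_kronecker _ _ _

def oneKroneckerRingHom : Matrix p p 𝕜 →+* Matrix (m × p) (m × p) 𝕜 where
  toFun B := 1 ⊗ₖ B
  map_one' := one_kronecker_one
  map_mul' A B := by rw [← mul_kronecker_mul, one_mul]
  map_zero' := kronecker_zero _
  map_add' A B := kronecker_add _ _ _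

theorem continuous_kroneckerOneRingHom :
    Continuous (kroneckerOneRingHom : Matrix m m 𝕜 →+* Matrix (m × p) (m × p) 𝕜) :=
  continuous_pi fun _ => continuous_pi fun _ =>
    (continuous_apply_apply _ _).mul continuous_const

theorem continuous_oneKroneckerRingHom :
    Continuous (oneKroneckerRingHom : Matrix p p 𝕜 →+* Matrix (m × p) (m × p) 𝕜) :=
  continuous_pi fun _ => continuous_pi fun _ =>
    continuous_const.mul (continuous_apply_apply _ _)

theorem exp_kronecker_one_add_one_kronecker (A : Matrix m m 𝕜) (B : Matrix p p 𝕜) :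
    NormedSpace.exp (A ⊗ₖ 1 + 1 ⊗ₖ B) = NormedSpace.exp A ⊗ₖ NormedSpace.exp B := by
  have hAB : Commute (A ⊗ₖ (1 : Matrix p p 𝕜)) ((1 : Matrix m m 𝕜) ⊗ₖ B) := by
    rw [Commute, SemiconjBy, ← mul_kronecker_mul, ← mul_kronecker_mul, one_mul, mul_one,
      one_mul, mul_one]
  calc NormedSpace.exp (A ⊗ₖ 1 + 1 ⊗ₖ B)
      = NormedSpace.exp (A ⊗ₖ 1) * NormedSpace.exp (1 ⊗ₖ B) := exp_add_of_commute _ _ hAB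
    _ = NormedSpace.exp A ⊗ₖ 1 * 1 ⊗ₖ NormedSpace.exp B :=
        congr_arg₂ (· * ·) (map_matrix_exp _ continuous_kroneckerOneRingHom A).symm
          (map_matrix_exp _ continuous_oneKroneckerRingHom B).symm
    _ = NormedSpace.exp A ⊗ₖ NormedSpace.exp B := by rw [← mul_kronecker_mul, mul_one, one_mul]

end Matrix

section

variable {n : ℕ}

theorem tensorMat_eq_kronecker (A B : Matrix (Fin n) (Fin n) ℂ) : tensorMat A B = A ⊗ₖ B :=
  rfl

theorem H2mat_eq_kronecker (h : Matrix (Fin n) (Fin n) ℂ) : H2mat h = h ⊗ₖ 1 + 1 ⊗ₖ h := by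
  ext p q
  simp only [H2mat, of_apply, Matrix.add_apply, kroneckerMap_apply, one_apply]

theorem exp_smul_H2mat (t : ℝ) (h : Matrix (Fin n) (Fin n) ℂ) :
    NormedSpace.exp (t • H2mat h) = NormedSpace.exp (t • h) ⊗ₖ NormedSpace.exp (t • h) := by
  rw [H2mat_eq_kronecker, smul_add, ← smul_kronecker, ← kronecker_smul,
    exp_kronecker_one_add_one_kronecker]

theorem ptrace2_kronecker (A B : Matrix (Fin n) (Fin n) ℂ) : ptrace2 (A ⊗ₖ B) = B.trace • A := by
  ext a b
  simp only [ptrace2, of_apply, kroneckerMap_apply, Matrix.smul_apply, smul_eq_mul, trace, diag,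
    Finset.mul_sum, mul_comm]

theorem Commute.kronecker_gibbsState {M : Matrix (Fin n × Fin n) (Fin n × Fin n) ℂ}
    {h : Matrix (Fin n) (Fin n) ℂ} (hM : Commute M (H2mat h)) (β : ℝ) :
    Commute M (gibbsState β h ⊗ₖ gibbsState β h) := by
  rw [gibbsState, smul_kronecker, kronecker_smul, ← exp_smul_H2mat]
  exact (((hM.smul_right (-β)).exp_right).smul_right _).smul_right _

theorem trace_gibbsState_smul (β : ℝ) (h : Matrix (Fin n) (Fin n) ℂ) :
    (gibbsState β h).trace • gibbsState β h = gibbsState β h := by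
  rw [gibbsState, trace_smul, smul_eq_mul]
  by_cases hZ : (NormedSpace.exp ((-β) • h)).trace = 0
  · simp only [hZ, _root_.inv_zero, zero_mul, zero_smul]
  · rw [inv_mul_cancel₀ hZ, one_smul]

theorem Qop_eq_self_of_forall_commute {C : Type*} [MeasurableSpace C] (ν : Measure C)
    [IsProbabilityMeasure ν] {U : C → Matrix (Fin n × Fin n) (Fin n × Fin n) ℂ}
    (hU : ∀ σ, U σ ∈ unitaryGroup (Fin n × Fin n) ℂ) {X : Matrix (Fin n × Fin n) (Fin n × Fin n) ℂ}
    (hX : ∀ σ, Commute (U σ) X) : Qop ν U X = X := by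
  have hconj : ∀ σ, U σ * X * (U σ)ᴴ = X := fun σ => by
    rw [(hX σ).eq, mul_assoc, ← star_eq_conjTranspose, mem_unitaryGroup_iff.mp (hU σ), mul_one]
  simp only [Qop, hconj, integral_const, probReal_univ, one_smul]

end

theorem gibbs_steady_state_general {C : Type*}
    [MeasurableSpace C] {n : ℕ}
    (ν : Measure C) [IsProbabilityMeasure ν]
    (U : C → Matrix (Fin n × Fin n) (Fin n × Fin n) ℂ)
    (hUunit : ∀ σ, U σ ∈ Matrix.unitaryGroup (Fin n × Fin n) ℂ)
    (h : Matrix (Fin n) (Fin n) ℂ)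
    (hUcomm : ∀ σ, Commute (U σ) (H2mat h)) (β : ℝ) :
    wildConv ν U (gibbsState β h) (gibbsState β h) = gibbsState β h := by
  rw [wildConv, tensorMat_eq_kronecker,
    Qop_eq_self_of_forall_commute ν hUunit fun σ => (hUcomm σ).kronecker_gibbsState β,
    ptrace2_kronecker, trace_gibbsState_smul]

/-- **Gibbs states are steady states** of the quantum Kac–Boltzmann equation:
if every `U(σ)` commutes with `H_2 = h ⊗ 1 + 1 ⊗ h`, then `ρ_β ⋆ ρ_β = ρ_β`. -/
theorem gibbs_steady_state {C : Type*} [MetricSpace C] [CompactSpace C]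
    [MeasurableSpace C] [BorelSpace C] {n : ℕ} [NeZero n]
    (ν : Measure C) [IsProbabilityMeasure ν]
    (U : C → Matrix (Fin n × Fin n) (Fin n × Fin n) ℂ)
    (hUcont : Continuous U)
    (hUunit : ∀ σ, U σ ∈ Matrix.unitaryGroup (Fin n × Fin n) ℂ)
    (h : Matrix (Fin n) (Fin n) ℂ) (hherm : h.IsHermitian)
    (hUcomm : ∀ σ, Commute (U σ) (H2mat h)) (β : ℝ) :
    wildConv ν U (gibbsState β h) (gibbsState β h) = gibbsState β h :=
  gibbs_steady_state_general ν U hUunit h hUcomm β
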